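/- Let k \geq 1 and \delta \geq 1 be natural numbers and let m be a natural number with k \leq m < k + \delta. Then \sum_{i=0}^{\delta} (-1)^i [k+i-1 choose i] [m choose \delta - i] v^{i(m-k)} = 0 in \mathbb{Q}(v). -/
import Mathlib


open Finset

/-- The indeterminate `v` in `ℚ(v)`. -/
noncomputable def v : RatFunc ℚ := RatFunc.X

/-- The Gaussian binomial coefficient `[a choose b]` in `ℚ(v)`,
with the convention that it is `0` for `b < 0`. -/
noncomputable def qbinom (a b : ℤ) : RatFunc ℚ :=
  if b < 0 then 0 else
    ∏ h ∈ Finset.range b.toNat,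
      (v ^ (a - (h : ℤ)) - v ^ (-(a - (h : ℤ)))) /
        (v ^ ((h : ℤ) + 1) - v ^ (-((h : ℤ) + 1)))

lemma v_ne_zero : v ≠ 0 := RatFunc.X_ne_zero

lemma v_pow_ne_one (n : ℕ) (hn : n ≠ 0) : v ^ n ≠ 1 := by
  intro h
  have h1 : (algebraMap (Polynomial ℚ) (RatFunc ℚ)) (Polynomial.X ^ n) =
      algebraMap (Polynomial ℚ) (RatFunc ℚ) 1 := by
    simpa [map_pow, RatFunc.algebraMap_X, v] using h
  have h2 := RatFunc.algebraMap_injective ℚ h1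
  have h3 := congrArg Polynomial.natDegree h2
  simp [Polynomial.natDegree_X_pow] at h3
  exact hn h3

lemma vmul (x y z : ℤ) (h : x + y = z) : v ^ x * v ^ y = v ^ z := by
  rw [← zpow_add₀ v_ne_zero, h]

lemma sub_zpow_ne_zero {c : ℤ} (hc : 0 < c) : v ^ c - v ^ (-c) ≠ 0 := by
  intro h
  have hc' : v ^ c = v ^ (-c) := sub_eq_zero.mp h
  have h2 : v ^ (2 * c) = 1 := by
    calc v ^ (2 * c) = v ^ c * v ^ c := (vmul c c (2*c) (by ring)).symm
    _ = v ^ (-c) * v ^ c := by rw [hc']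
    _ = 1 := vmul _ _ 0 (by ring)
  lift c to ℕ using hc.le with n
  rw [show (2 * (n : ℤ)) = ((2 * n : ℕ) : ℤ) by push_cast; ring, zpow_natCast] at h2
  exact v_pow_ne_one _ (by omega) h2

lemma qbinom_of_neg {a b : ℤ} (hb : b < 0) : qbinom a b = 0 := if_pos hb

lemma qbinom_zero (a : ℤ) : qbinom a 0 = 1 := by simp [qbinom]

noncomputable def Np (n : ℕ) (a : ℤ) : RatFunc ℚ :=
  ∏ h ∈ Finset.range n, (v ^ (a - (h : ℤ)) - v ^ (-(a - (h : ℤ))))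

noncomputable def Dd (n : ℕ) : RatFunc ℚ :=
  ∏ h ∈ Finset.range n, (v ^ ((h : ℤ) + 1) - v ^ (-((h : ℤ) + 1)))

lemma Dd_ne_zero (n : ℕ) : Dd n ≠ 0 := by
  refine Finset.prod_ne_zero_iff.mpr fun h _ => ?_
  exact sub_zpow_ne_zero (by positivity)

lemma qbinom_natCast (a : ℤ) (n : ℕ) : qbinom a (n : ℤ) = Np n a / Dd n := by
  rw [qbinom, if_neg (by simp), Np, Dd, ← Finset.prod_div_distrib]
  simp

lemma Np_succ (n : ℕ) (a : ℤ) :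
    Np (n + 1) a = Np n (a - 1) * (v ^ a - v ^ (-a)) := by
  rw [Np, Finset.prod_range_succ']
  congr 1
  · refine Finset.prod_congr rfl fun h _ => ?_
    have e : a - ((h : ℤ) + 1) = (a - 1) - (h : ℤ) := by ring
    push_cast
    rw [e]
  · simp

lemma Np_succ' (n : ℕ) (a : ℤ) :
    Np (n + 1) a = Np n a * (v ^ (a - (n : ℤ)) - v ^ (-(a - (n : ℤ)))) := by
  rw [Np, Finset.prod_range_succ]; rfl

lemma Dd_succ (n : ℕ) : Dd (n + 1) = Dd n * (v ^ ((n : ℤ) + 1) - v ^ (-((n : ℤ) + 1))) := by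
  rw [Dd, Finset.prod_range_succ]; rfl

lemma pascal_nat (a : ℤ) (n : ℕ) :
    qbinom a (n : ℤ) =
      v ^ (n : ℤ) * qbinom (a - 1) (n : ℤ) + v ^ ((n : ℤ) - a) * qbinom (a - 1) ((n : ℤ) - 1) := by
  cases n with
  | zero =>
    rw [show ((0:ℕ):ℤ) - 1 = (-1 : ℤ) by norm_num, qbinom_of_neg (show (-1:ℤ) < 0 by norm_num)]
    simp [qbinom_zero]
  | succ n =>
    have hb : ((n + 1 : ℕ) : ℤ) - 1 = (n : ℤ) := by push_cast; ring
    rw [hb, qbinom_natCast, qbinom_natCast, qbinom_natCast, Np_succ, Dd_succ,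
      Np_succ' n (a - 1)]
    have e1 : (a - 1 - (n : ℤ)) = a - ((n : ℤ) + 1) := by ring
    have e2 : (-(a - 1 - (n : ℤ))) = ((n : ℤ) + 1) - a := by ring
    rw [e2, e1]
    have hA : v ^ a ≠ 0 := zpow_ne_zero _ v_ne_zero
    have hB : v ^ ((n : ℤ) + 1) ≠ 0 := zpow_ne_zero _ v_ne_zero
    have hD : Dd n ≠ 0 := Dd_ne_zero n
    have hd : v ^ ((n : ℤ) + 1) - v ^ (-((n : ℤ) + 1)) ≠ 0 :=
      sub_zpow_ne_zero (by positivity)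
    rw [show ((n + 1 : ℕ) : ℤ) = (n : ℤ) + 1 by push_cast; ring]
    rw [zpow_neg v a, zpow_neg v ((n : ℤ) + 1),
      zpow_sub₀ v_ne_zero a ((n : ℤ) + 1), zpow_sub₀ v_ne_zero ((n : ℤ) + 1) a]
    rw [zpow_neg] at hd
    rw [div_eq_iff (mul_ne_zero hD hd), add_mul, ← mul_div_assoc, div_mul_cancel₀ _ (mul_ne_zero hD hd)]
    field_simp
    ring

lemma pascal (a b : ℤ) (hb : 0 ≤ b) :
    qbinom a b = v ^ b * qbinom (a - 1) b + v ^ (b - a) * qbinom (a - 1) (b - 1) := by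
  lift b to ℕ using hb
  exact pascal_nat a b

lemma qbinom_eq_zero {a b : ℤ} (h0 : 0 ≤ a) (hab : a < b) : qbinom a b = 0 := by
  rw [qbinom, if_neg (by omega)]
  apply Finset.prod_eq_zero (i := a.toNat)
  · simp only [Finset.mem_range]; omega
  · rw [Int.toNat_of_nonneg h0]
    simp

lemma qbinom_neg_top (k δ : ℕ) :
    qbinom (-(k : ℤ)) (δ : ℤ) = (-1) ^ δ * qbinom ((k : ℤ) + δ - 1) (δ : ℤ) := by
  rw [qbinom_natCast, qbinom_natCast, Np, Np]
  have h1 : ∏ h ∈ range δ, (v ^ (-(k : ℤ) - (h : ℤ)) - v ^ (-(-(k : ℤ) - (h : ℤ)))) =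
      (-1 : RatFunc ℚ) ^ δ * ∏ h ∈ range δ, (v ^ ((k : ℤ) + (h : ℤ)) - v ^ (-((k : ℤ) + (h : ℤ)))) := by
    calc ∏ h ∈ range δ, (v ^ (-(k : ℤ) - (h : ℤ)) - v ^ (-(-(k : ℤ) - (h : ℤ))))
        = ∏ h ∈ range δ, ((-1) * (v ^ ((k : ℤ) + (h : ℤ)) - v ^ (-((k : ℤ) + (h : ℤ))))) := by
          refine Finset.prod_congr rfl fun h _ => ?_
          have e1 : (-(k : ℤ) - (h : ℤ)) = -((k : ℤ) + (h : ℤ)) := by ring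
          rw [e1, neg_neg]
          ring
      _ = (-1 : RatFunc ℚ) ^ δ * ∏ h ∈ range δ, (v ^ ((k : ℤ) + (h : ℤ)) - v ^ (-((k : ℤ) + (h : ℤ)))) := by
          rw [Finset.prod_mul_distrib, Finset.prod_const, Finset.card_range]
  have h2 : ∏ h ∈ range δ, (v ^ ((k : ℤ) + (δ : ℤ) - 1 - (h : ℤ)) - v ^ (-((k : ℤ) + (δ : ℤ) - 1 - (h : ℤ)))) =
      ∏ h ∈ range δ, (v ^ ((k : ℤ) + (h : ℤ)) - v ^ (-((k : ℤ) + (h : ℤ)))) := by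
    rw [← Finset.prod_range_reflect]
    refine Finset.prod_congr rfl fun j hj => ?_
    simp only [Finset.mem_range] at hj
    have e : ((δ - 1 - j : ℕ) : ℤ) = (δ : ℤ) - 1 - (j : ℤ) := by omega
    rw [e]
    have e3 : (k : ℤ) + (δ : ℤ) - 1 - ((δ : ℤ) - 1 - (j : ℤ)) = (k : ℤ) + (j : ℤ) := by ring
    rw [e3]
  rw [h1, h2, mul_div_assoc]

lemma v_mul_inv (x y z : ℤ) (h : x - y = z) : v ^ x * (v ^ y)⁻¹ = v ^ z := by
  rw [← zpow_neg, vmul x (-y) z (by omega)]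

lemma main_identity (k m : ℕ) : ∀ δ : ℕ,
    ∑ i ∈ Finset.range (δ + 1),
        (-1 : RatFunc ℚ) ^ i * qbinom ((k : ℤ) + i - 1) i * qbinom m ((δ : ℤ) - i) *
          v ^ ((i : ℤ) * ((m : ℤ) - k)) =
      v ^ (-((k : ℤ) * δ)) * qbinom ((m : ℤ) - k) δ := by
  induction m with
  | zero =>
    intro δ
    have hstep : ∀ i ∈ Finset.range (δ + 1), i ≠ δ →
        (-1 : RatFunc ℚ) ^ i * qbinom ((k : ℤ) + i - 1) i *
          qbinom ((0 : ℕ) : ℤ) ((δ : ℤ) - i) * v ^ ((i : ℤ) * (((0 : ℕ) : ℤ) - k)) = 0 := by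
      intro i hi hne
      simp only [Finset.mem_range] at hi
      rw [qbinom_eq_zero (a := ((0:ℕ):ℤ)) (b := (δ : ℤ) - i) (by norm_num) (by push_cast; omega)]
      ring
    rw [Finset.sum_eq_single_of_mem δ (Finset.self_mem_range_succ δ) hstep]
    rw [sub_self, qbinom_zero, mul_one]
    rw [show (((0 : ℕ) : ℤ) - (k : ℤ)) = -(k : ℤ) by push_cast; ring, qbinom_neg_top]
    rw [show ((δ : ℤ) * (-(k : ℤ))) = -((k : ℤ) * (δ : ℤ)) by ring]
    ring
  | succ n ih =>
    intro δ
    cases δ with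
    | zero =>
      simp [qbinom_zero]
    | succ e =>
      have n2 : v ^ (((n + 1 : ℕ)) : ℤ) ≠ 0 := zpow_ne_zero _ v_ne_zero
      have hterm : ∀ i ∈ Finset.range (e + 1 + 1),
          (-1 : RatFunc ℚ) ^ i * qbinom ((k : ℤ) + i - 1) i *
              qbinom ((n + 1 : ℕ) : ℤ) (((e + 1 : ℕ) : ℤ) - i) *
              v ^ ((i : ℤ) * (((n + 1 : ℕ) : ℤ) - k)) =
            v ^ (((e + 1 : ℕ) : ℤ)) *
                ((-1 : RatFunc ℚ) ^ i * qbinom ((k : ℤ) + i - 1) i *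
                  qbinom ((n : ℕ) : ℤ) (((e + 1 : ℕ) : ℤ) - i) *
                  v ^ ((i : ℤ) * (((n : ℕ) : ℤ) - k))) +
              v ^ (((e + 1 : ℕ) : ℤ)) * (v ^ (((n + 1 : ℕ) : ℤ)))⁻¹ *
                ((-1 : RatFunc ℚ) ^ i * qbinom ((k : ℤ) + i - 1) i *
                  qbinom ((n : ℕ) : ℤ) (((e : ℕ) : ℤ) - i) *
                  v ^ ((i : ℤ) * (((n : ℕ) : ℤ) - k))) := by
        intro i hi
        simp only [Finset.mem_range] at hi
        have hge : (0 : ℤ) ≤ ((e + 1 : ℕ) : ℤ) - i := by push_cast; omega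
        rw [pascal (((n + 1 : ℕ)) : ℤ) (((e + 1 : ℕ) : ℤ) - i) hge]
        rw [show (((n + 1 : ℕ) : ℤ) - 1) = ((n : ℕ) : ℤ) by push_cast; ring]
        rw [show (((e + 1 : ℕ) : ℤ) - (i : ℤ) - 1) = ((e : ℕ) : ℤ) - i by push_cast; ring]
        have n1 : v ^ ((i : ℕ) : ℤ) ≠ 0 := zpow_ne_zero _ v_ne_zero
        have c1 : v ^ (((e + 1 : ℕ) : ℤ)) * (v ^ ((i : ℕ) : ℤ))⁻¹ =
            v ^ (((e + 1 : ℕ) : ℤ) - (i : ℤ)) :=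
          v_mul_inv ((e + 1 : ℕ) : ℤ) ((i : ℕ) : ℤ) (((e + 1 : ℕ) : ℤ) - (i : ℤ)) (by ring)
        have c2 : v ^ (((e + 1 : ℕ) : ℤ)) * (v ^ ((i : ℕ) : ℤ))⁻¹ * (v ^ (((n + 1 : ℕ)) : ℤ))⁻¹ =
            v ^ (((e + 1 : ℕ) : ℤ) - (i : ℤ) - ((n + 1 : ℕ) : ℤ)) := by
          rw [c1, v_mul_inv (((e + 1 : ℕ) : ℤ) - (i : ℤ)) (((n + 1 : ℕ)) : ℤ)
            (((e + 1 : ℕ) : ℤ) - (i : ℤ) - ((n + 1 : ℕ) : ℤ)) (by ring)]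
        have c3 : v ^ ((i : ℤ) * (((n : ℕ) : ℤ) - k)) =
            v ^ ((i : ℤ) * (((n + 1 : ℕ) : ℤ) - k)) * (v ^ ((i : ℕ) : ℤ))⁻¹ :=
          (v_mul_inv ((i : ℤ) * (((n + 1 : ℕ) : ℤ) - k)) ((i : ℕ) : ℤ)
            ((i : ℤ) * (((n : ℕ) : ℤ) - k)) (by push_cast; ring)).symm
        rw [← c1, ← c2, c3]
        ring
    -- continue
      rw [Finset.sum_congr rfl hterm, Finset.sum_add_distrib, ← Finset.mul_sum, ← Finset.mul_sum]
      rw [ih (e + 1), Finset.sum_range_succ]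
      have hlast : (-1 : RatFunc ℚ) ^ (e + 1) * qbinom ((k : ℤ) + (e + 1 : ℕ) - 1) ((e + 1 : ℕ)) *
          qbinom ((n : ℕ) : ℤ) (((e : ℕ) : ℤ) - ((e + 1 : ℕ) : ℤ)) *
          v ^ (((e + 1 : ℕ) : ℤ) * (((n : ℕ) : ℤ) - k)) = 0 := by
        rw [qbinom_of_neg (a := ((n : ℕ) : ℤ)) (b := ((e : ℕ) : ℤ) - ((e + 1 : ℕ) : ℤ)) (by push_cast; omega)]
        ring
      rw [hlast, add_zero, ih e]
      rw [pascal (((n + 1 : ℕ) : ℤ) - k) ((e + 1 : ℕ) : ℤ) (by push_cast; omega)]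
      rw [show ((((n + 1 : ℕ)) : ℤ) - (k : ℤ) - 1) = ((n : ℕ) : ℤ) - k by push_cast; ring]
      rw [show (((e + 1 : ℕ) : ℤ) - 1) = ((e : ℕ) : ℤ) by push_cast; ring]
      have d1 : v ^ (-((k : ℤ) * ((e : ℕ) : ℤ))) =
          v ^ (-((k : ℤ) * ((e + 1 : ℕ) : ℤ))) * v ^ ((k : ℕ) : ℤ) :=
        (vmul (-((k : ℤ) * ((e + 1 : ℕ) : ℤ))) ((k : ℕ) : ℤ) (-((k : ℤ) * ((e : ℕ) : ℤ)))
          (by push_cast; ring)).symm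
      have d2 : v ^ (((e + 1 : ℕ) : ℤ) - ((((n + 1 : ℕ)) : ℤ) - k)) =
          v ^ (((e + 1 : ℕ) : ℤ)) * (v ^ (((n + 1 : ℕ)) : ℤ))⁻¹ * v ^ ((k : ℕ) : ℤ) := by
        rw [v_mul_inv (((e + 1 : ℕ) : ℤ)) ((((n + 1 : ℕ)) : ℤ))
          ((((e + 1 : ℕ)) : ℤ) - (((n + 1 : ℕ)) : ℤ)) (by ring),
          vmul ((((e + 1 : ℕ)) : ℤ) - (((n + 1 : ℕ)) : ℤ)) ((k : ℕ) : ℤ)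
          (((e + 1 : ℕ) : ℤ) - ((((n + 1 : ℕ)) : ℤ) - (k : ℤ))) (by push_cast; ring)]
      rw [d1, d2]
      ring

theorem qbinom_alternating_sum_vanishes (k δ m : ℕ) (hk : 1 ≤ k) (hδ : 1 ≤ δ)
    (hkm : k ≤ m) (hm : m < k + δ) :
    ∑ i ∈ Finset.range (δ + 1),
        (-1 : RatFunc ℚ) ^ i * qbinom ((k : ℤ) + i - 1) i * qbinom m ((δ : ℤ) - i) *
          v ^ ((i : ℤ) * ((m : ℤ) - k)) = 0 := by
  rw [main_identity k m δ, qbinom_eq_zero (by push_cast; omega) (by push_cast; omega), mul_zero]
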